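/- arXiv:1502.07674 — 6 statements merged into one kernel-verified Lean document; each statement's English description precedes it below -/
import Mathlib

section
/- For a plane permutation p = (s, π) on [n], where s is an n-cycle and D_p = s ∘ π⁻¹ is its diagonal, the number of exceedances of p equals the number of anti-exceedances of D_p minus 1. (Here s_i is an exceedance of p if s_i <_s π(s_i), and an anti-exceedance of D_p if s_i ≥_s D_p(s_i), where <_s is the linear order induced by listing the cycle s starting from a fixed element s_0.) -/
/-!
Conjugating by the listing `f` turns the cycle `s` into the rotation `c : i ↦ i + 1` of `Fin n`
and `π` into `g = f⁻¹ π f`, so the diagonal becomes `c g⁻¹`. Writing an index as `g j`, it is an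
anti-exceedance of the diagonal iff `c j ≤ g j`, i.e. iff `j < g j` or `j` is the last index
(where `c` wraps around to `0`). So the anti-exceedances of the diagonal are the exceedances
plus exactly one more.
-/

open Finset Equiv

theorem finRotate_le_iff_eq_last_or_lt {m : ℕ} (j k : Fin (m + 1)) :
    finRotate (m + 1) j ≤ k ↔ j = Fin.last m ∨ j < k := by
  by_cases hj : j = Fin.last m
  · simp [hj]
  · rw [Fin.le_def, coe_finRotate_of_ne_last hj, Fin.lt_def]
    omega

theorem card_filter_perm_symm_apply {α : Type*} [Fintype α] (g : Perm α) (P : α → α → Prop)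
    [DecidableRel P] :
    #{i | P (g.symm i) i} = #{j | P j (g j)} :=
  card_equiv g.symm (by simp)

theorem card_filter_finRotate_le_eq_card_filter_lt_add_one {m : ℕ} (g : Perm (Fin (m + 1))) :
    #{j | finRotate (m + 1) j ≤ g j} = #{j | j < g j} + 1 := by
  have hsplit : univ.filter (fun j => finRotate (m + 1) j ≤ g j) =
      insert (Fin.last m) (univ.filter fun j => j < g j) := by
    ext j
    simp only [mem_filter, mem_univ, true_and, mem_insert, finRotate_le_iff_eq_last_or_lt]
  rw [hsplit, card_insert_of_notMem]
  simpa using Fin.le_last _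

theorem card_filter_finRotate_perm_symm_le {m : ℕ} (g : Perm (Fin (m + 1))) :
    #{i | finRotate (m + 1) (g.symm i) ≤ i} = #{i | i < g i} + 1 := by
  rw [card_filter_perm_symm_apply g (fun j i => finRotate (m + 1) j ≤ i),
    card_filter_finRotate_le_eq_card_filter_lt_add_one]

/-- The plane permutation `(s, π)` determined by the listing `f`
(`s_i = f i`), where `s = f * finRotate n * f⁻¹`.  An index `i` is an
exceedance of `p` if `s_i <_s π (s_i)`, i.e. `i < f.symm (π (f i))`;
an index `i` is an anti-exceedance of the diagonal `D = s * π⁻¹` if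
`s_i ≥_s D (s_i)`, i.e. `f.symm (D (f i)) ≤ i`. -/
theorem exceedance_eq_antiexceedance_diag_sub_one
    (n : ℕ) (hn : 0 < n) (f π : Equiv.Perm (Fin n)) :
    (Finset.univ.filter
        (fun i : Fin n => i < f.symm (π (f i)))).card + 1 =
    (Finset.univ.filter
        (fun i : Fin n =>
          f.symm (((f * finRotate n * f⁻¹) * π⁻¹) (f i)) ≤ i)).card := by
  obtain ⟨m, rfl⟩ := Nat.exists_eq_add_one_of_ne_zero hn.ne'
  have diag_conj : ∀ i, f.symm (((f * finRotate (m + 1) * f⁻¹) * π⁻¹) (f i)) =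
      finRotate (m + 1) ((f⁻¹ * π * f)⁻¹ i) := fun i => by
    simp [Perm.mul_apply, mul_inv_rev, Perm.inv_def]
  simp only [diag_conj]
  exact (card_filter_finRotate_perm_symm_le (f⁻¹ * π * f)).symm
end

section
/- For a plane permutation p = (s, π) on [n], the number of cycles of π plus the number of cycles of D_p = s ∘ π⁻¹ is at most n + 1. -/
/-!
Write `‖σ‖ = n - C(σ)`. Multiplying a permutation by a transposition changes its number of cycles
by exactly one: `swap x (π x) * π` detaches `x` from its cycle, and multiplying a permutation
fixing `x` by `swap x y` attaches `x` to the cycle of `y`. Hence `‖σ * swap a b‖ ≥ ‖σ‖ - 1`, and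
peeling transpositions off `τ` gives the triangle inequality `‖σ * τ‖ ≤ ‖σ‖ + ‖τ‖`. Applied to
`s = (s * π⁻¹) * π` with `C(s) = 1` this is the claim.
-/

/-- Number of cycles (orbits, including fixed points) of a permutation. -/
def cycleCount {α : Type*} [Fintype α] [DecidableEq α] (σ : Equiv.Perm α) : ℕ :=
  Fintype.card α - σ.cycleType.sum + σ.cycleType.card

open Equiv Equiv.Perm Finset

variable {α : Type*} [Fintype α] [DecidableEq α]

lemma cycleCount_add_card_support (σ : Perm α) :
    cycleCount σ + #σ.support = Fintype.card α + σ.cycleType.card := by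
  have := σ.sum_cycleType_le
  rw [cycleCount, σ.sum_cycleType] at *
  omega

@[simp]
lemma cycleCount_one : cycleCount (1 : Perm α) = Fintype.card α := by
  simp [cycleCount]

@[simp]
lemma cycleCount_conj (σ τ : Perm α) : cycleCount (τ * σ * τ⁻¹) = cycleCount σ := by
  simp [cycleCount, cycleType_conj]

lemma Equiv.Perm.IsCycle.cycleCount_add_card_support {c : Perm α} (hc : c.IsCycle) :
    cycleCount c + #c.support = Fintype.card α + 1 := by
  rw [_root_.cycleCount_add_card_support, hc.cycleType, Multiset.card_singleton]

lemma Equiv.Perm.Disjoint.cycleCount_mul {σ τ : Perm α} (h : σ.Disjoint τ) :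
    cycleCount (σ * τ) + Fintype.card α = cycleCount σ + cycleCount τ := by
  have hσ := cycleCount_add_card_support σ
  have hτ := cycleCount_add_card_support τ
  have hστ := cycleCount_add_card_support (σ * τ)
  rw [h.card_support_mul, h.cycleType_mul, Multiset.card_add] at hστ
  omega

lemma cycleCount_finRotate_le_one (n : ℕ) : cycleCount (finRotate n) ≤ 1 := by
  match n with
  | 0 | 1 => rw [Subsingleton.elim (finRotate _) 1, cycleCount_one, Fintype.card_fin] <;> omega
  | n + 2 =>
    have := (isCycle_finRotate (n := n)).cycleCount_add_card_support
    rw [support_finRotate, card_univ] at this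
    omega

lemma Equiv.Perm.IsCycle.cycleCount_swap_mul {c : Perm α} (hc : c.IsCycle) {x : α}
    (hx : c x ≠ x) : cycleCount (swap x (c x) * c) = cycleCount c + 1 := by
  have hcount := hc.cycleCount_add_card_support
  by_cases hcc : c (c x) = x
  · have hswap := hc.eq_swap_of_apply_apply_eq_self hx hcc
    have hsupp : #c.support = 2 := by rw [hswap]; exact card_support_swap hx.symm
    have hone : swap x (c x) * c = 1 := by nth_rewrite 2 [hswap]; exact swap_mul_self _ _
    rw [hone, cycleCount_one]
    omega
  · have hcount' := (hc.swap_mul hx hcc).cycleCount_add_card_support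
    have hx_mem : x ∈ c.support := mem_support.2 hx
    rw [support_swap_mul_eq c x hcc, sdiff_singleton_eq_erase, card_erase_of_mem hx_mem]
      at hcount'
    have := card_pos.2 ⟨x, hx_mem⟩
    omega

lemma cycleCount_swap_apply_mul {π : Perm α} {x : α} (hx : π x ≠ x) :
    cycleCount (swap x (π x) * π) = cycleCount π + 1 := by
  set c := π.cycleOf x
  have hc : c ∈ π.cycleFactorsFinset := cycleOf_mem_cycleFactorsFinset_iff.2 (mem_support.2 hx)
  have hdisj : (π * c⁻¹).Disjoint c := disjoint_mul_inv_of_mem_cycleFactorsFinset hc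
  have hcx : c x = π x := π.cycleOf_apply_self x
  have hdisj' : (swap x (c x) * c).Disjoint (π * c⁻¹) :=
    hdisj.symm.mono (fun _ hy ↦ (mem_support_swap_mul_imp_mem_support_ne hy).1) le_rfl
  have hπ : π = c * (π * c⁻¹) := by rw [hdisj.symm.commute.eq, inv_mul_cancel_right]
  have hsplit : cycleCount (swap x (c x) * c) = cycleCount c + 1 :=
    (isCycle_cycleOf π hx).cycleCount_swap_mul (hcx ▸ hx)
  have h₁ := hdisj.symm.cycleCount_mul
  have h₂ := hdisj'.cycleCount_mul
  rw [← hπ] at h₁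
  rw [mul_assoc, ← hπ] at h₂
  rw [hcx] at h₂ hsplit
  omega

lemma cycleCount_swap_mul_of_apply_eq_self {σ : Perm α} {x y : α} (hx : σ x = x) (hxy : x ≠ y) :
    cycleCount (swap x y * σ) + 1 = cycleCount σ := by
  have hy : (swap x y * σ) x = y := by rw [mul_apply, hx, swap_apply_left]
  have := cycleCount_swap_apply_mul (π := swap x y * σ) (x := x) (by rw [hy]; exact hxy.symm)
  rw [hy, swap_mul_self_mul] at this
  omega

lemma cycleCount_swap_mul_le (ρ : Perm α) (a b : α) :
    cycleCount (swap a b * ρ) ≤ cycleCount ρ + 1 := by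
  rcases eq_or_ne a b with rfl | hab
  · rw [swap_self, ← Perm.one_def, one_mul]
    omega
  by_cases ha : ρ a = a
  · have := cycleCount_swap_mul_of_apply_eq_self ha hab
    omega
  by_cases hb : ρ b = b
  · have := cycleCount_swap_mul_of_apply_eq_self hb hab.symm
    rw [swap_comm]
    omega
  by_cases hba : b = ρ a
  · rw [hba, cycleCount_swap_apply_mul ha]
  -- Otherwise conjugate `swap a b` by `swap a (ρ a)`: detach `a`, recurse, reattach `a`.
  set c := ρ a
  have hac : a ≠ c := Ne.symm ha
  have hdetach : cycleCount (swap a c * ρ) = cycleCount ρ + 1 := cycleCount_swap_apply_mul ha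
  have hrec := cycleCount_swap_mul_le (swap a c * ρ) c b
  have hfix : (swap c b * (swap a c * ρ)) a = a := by
    simp [swap_apply_of_ne_of_ne hac hab, c]
  have hattach := cycleCount_swap_mul_of_apply_eq_self hfix hac
  have hconj : swap a c * swap c b * swap a c = swap a b := by
    have := swap_apply_apply (swap a c) c b
    rw [swap_apply_right, swap_apply_of_ne_of_ne hab.symm hba, swap_inv] at this
    exact this.symm
  rw [← hconj, mul_assoc, mul_assoc]
  omega
termination_by #ρ.support
decreasing_by exact card_support_swap_mul ha

lemma cycleCount_mul_swap_le (ρ : Perm α) (a b : α) :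
    cycleCount (ρ * swap a b) ≤ cycleCount ρ + 1 := by
  rw [mul_swap_eq_swap_mul]
  exact cycleCount_swap_mul_le ρ _ _

lemma cycleCount_add_cycleCount_le_cycleCount_mul (σ τ : Perm α) :
    cycleCount σ + cycleCount τ ≤ Fintype.card α + cycleCount (σ * τ) := by
  by_cases hτ : τ = 1
  · simp [hτ, add_comm]
  obtain ⟨x, hx⟩ : ∃ x, τ x ≠ x := by
    by_contra! h
    exact hτ (Perm.ext h)
  have hdetach := cycleCount_swap_apply_mul hx
  have hrec := cycleCount_add_cycleCount_le_cycleCount_mul (σ * swap x (τ x)) (swap x (τ x) * τ)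
  have hσ := cycleCount_mul_swap_le (σ * swap x (τ x)) x (τ x)
  rw [mul_swap_mul_self] at hσ
  rw [mul_assoc, swap_mul_self_mul] at hrec
  omega
termination_by #τ.support
decreasing_by exact card_support_swap_mul hx

/-- For a plane permutation `p = (s, π)` on `[n]` (with `s` an `n`-cycle,
given by a listing `f` as `s = f * finRotate n * f⁻¹`), the number of cycles
of `π` plus the number of cycles of the diagonal `D_p = s * π⁻¹` is at most `n + 1`. -/
theorem cycleCount_add_cycleCount_diag_le
    (n : ℕ) (f π : Equiv.Perm (Fin n)) :
    cycleCount π + cycleCount ((f * finRotate n * f⁻¹) * π⁻¹) ≤ n + 1 := by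
  have htriangle := cycleCount_add_cycleCount_le_cycleCount_mul (f * finRotate n * f⁻¹ * π⁻¹) π
  rw [inv_mul_cancel_right, cycleCount_conj, Fintype.card_fin] at htriangle
  have := cycleCount_finRotate_le_one n
  omega
end

section
/- Let σ be an n-cycle and π an arbitrary permutation of [n], and let τ be the permutation obtained from π by a single block-transposition move: namely τ = D⁻¹ ∘ σ' where D = σ ∘ π⁻¹ and σ' is the n-cycle obtained from σ by interchanging two adjacent blocks of its cycle listing. Then C(π) - C(τ) ∈ {-2, 0, 2}. -/
/-! Right multiplication by a transposition changes the number of cycles by at most one: every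
cycle of `p * swap x y` meets at most one cycle of `p` other than the cycle of `y`, so
`C p ≤ C (p * swap x y) + 1`, and `p = p * swap x y * swap x y` gives the reverse inequality.
With `a = s_i`, `b = s_{j+1}`, `c = s_{l+1}` we have `σ' = (a b) (b c) σ`, hence
`τ = D⁻¹ σ' = π (σ⁻¹ (a b) σ) (σ⁻¹ (b c) σ)` differs from `π` by two transpositions. So
`|C π - C τ| ≤ 2`, and `sign p = (-1) ^ (n + C p)` makes `C π - C τ` even. -/

open Equiv Equiv.Perm Finset

theorem Finset.card_image_le_card_image_of_eq_imp_eq {α β γ : Type*} [DecidableEq β]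
    [DecidableEq γ] {s : Finset α} {f : α → β} {g : α → γ}
    (h : ∀ a ∈ s, ∀ b ∈ s, g a = g b → f a = f b) : #(s.image f) ≤ #(s.image g) := by
  set t := s.image fun a => (g a, f a)
  have hinj : Set.InjOn Prod.fst (t : Set (γ × β)) := by
    simp only [t, coe_image]
    rintro _ ⟨a, ha, rfl⟩ _ ⟨b, hb, rfl⟩ hab
    simp only [Prod.mk.injEq] at hab ⊢
    exact ⟨hab, h a ha b hb hab⟩
  calc #(s.image f) = #(t.image Prod.snd) := by rw [image_image]; rfl
    _ ≤ #t := card_image_le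
    _ = #(t.image Prod.fst) := (card_image_of_injOn hinj).symm
    _ = #(s.image g) := by rw [image_image]; rfl

namespace Equiv.Perm

variable {α : Type*} [Fintype α] [DecidableEq α]

def sameCycleClass (p : Perm α) (a : α) : Finset α := {b | p.SameCycle a b}

theorem sameCycleClass_eq_iff {p : Perm α} {a b : α} :
    p.sameCycleClass a = p.sameCycleClass b ↔ p.SameCycle a b := by
  refine ⟨fun h => ?_, fun h => ?_⟩
  · have hb : b ∈ p.sameCycleClass b := mem_filter.2 ⟨mem_univ b, SameCycle.refl p b⟩
    rw [← h] at hb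
    simpa [sameCycleClass] using hb
  · ext c
    simp only [sameCycleClass, mem_filter, mem_univ, true_and]
    exact ⟨h.symm.trans, h.trans⟩

theorem sameCycleClass_eq_support_cycleOf {p : Perm α} {a : α} (ha : a ∈ p.support) :
    p.sameCycleClass a = (p.cycleOf a).support := by
  ext b
  simp only [sameCycleClass, mem_filter, mem_univ, true_and, mem_support_cycleOf_iff, ha,
    and_true]

theorem image_cycleOf_support (p : Perm α) :
    p.support.image p.cycleOf = p.cycleFactorsFinset := by
  ext c
  simp only [mem_image]
  refine ⟨?_, fun hc => ?_⟩
  · rintro ⟨a, ha, rfl⟩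
    exact cycleOf_mem_cycleFactorsFinset_iff.2 ha
  · obtain ⟨a, ha⟩ := (mem_cycleFactorsFinset_iff.1 hc).1.nonempty_support
    exact ⟨a, mem_cycleFactorsFinset_support_le hc ha, (cycle_is_cycleOf ha hc).symm⟩

theorem card_cycleType_eq_card_cycleFactorsFinset (p : Perm α) :
    Multiset.card p.cycleType = #p.cycleFactorsFinset := by
  rw [cycleType_def, Multiset.card_map]
  rfl

theorem card_image_sameCycleClass_support (p : Perm α) :
    #(p.support.image p.sameCycleClass) = Multiset.card p.cycleType := by
  have hinj : Set.InjOn support (p.cycleFactorsFinset : Set (Perm α)) := by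
    intro c hc d hd hcd
    obtain ⟨a, ha⟩ := (mem_cycleFactorsFinset_iff.1 hc).1.nonempty_support
    rw [cycle_is_cycleOf ha hc, cycle_is_cycleOf (hcd ▸ ha) hd]
  rw [card_cycleType_eq_card_cycleFactorsFinset, ← card_image_of_injOn hinj,
    ← image_cycleOf_support, image_image]
  exact congrArg card (image_congr fun a ha => sameCycleClass_eq_support_cycleOf ha)

theorem cycleCount_eq_card_image_sameCycleClass (p : Perm α) :
    cycleCount p = #(univ.image p.sameCycleClass) := by
  have hdisj : _root_.Disjoint (p.support.image p.sameCycleClass)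
      (p.supportᶜ.image p.sameCycleClass) := by
    simp only [disjoint_left, mem_image, mem_compl, not_exists, not_and]
    rintro _ ⟨a, ha, rfl⟩ b hb hba
    exact hb ((sameCycleClass_eq_iff.1 hba).mem_support_iff.2 ha)
  have hfixed : #(p.supportᶜ.image p.sameCycleClass) = #p.supportᶜ := by
    refine card_image_of_injOn fun a ha b _ hab => ?_
    have hfix : p a = a := by simpa using ha
    exact (sameCycleClass_eq_iff.1 hab).eq_of_left hfix
  rw [← union_compl p.support, image_union, card_union_of_disjoint hdisj, hfixed,
    card_image_sameCycleClass_support, card_compl, cycleCount, sum_cycleType, add_comm]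

theorem SameCycle.of_mul_swap {p : Perm α} {x y a b : α} (h : (p * swap x y).SameCycle a b) :
    p.SameCycle a b ∨ (p.SameCycle a x ∧ p.SameCycle y b) ∨
      (p.SameCycle a y ∧ p.SameCycle x b) := by
  obtain ⟨n, -, rfl⟩ := h.exists_pow_eq'
  clear h
  induction n with
  | zero => exact Or.inl (SameCycle.refl p a)
  | succ n ih =>
    rw [pow_succ', Perm.mul_apply, Perm.mul_apply, sameCycle_apply_right, sameCycle_apply_right,
      sameCycle_apply_right]
    generalize ((p * swap x y) ^ n) a = z at ih ⊢
    rcases eq_or_ne z x with rfl | hzx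
    · simp only [swap_apply_left, SameCycle.refl, and_true] at ih ⊢
      tauto
    rcases eq_or_ne z y with rfl | hzy
    · simp only [swap_apply_right, SameCycle.refl, and_true] at ih ⊢
      tauto
    rwa [swap_apply_of_ne_of_ne hzx hzy]

theorem cycleCount_le_cycleCount_mul_swap_add_one (p : Perm α) (x y : α) :
    cycleCount p ≤ cycleCount (p * swap x y) + 1 := by
  set S : Finset α := {a | ¬ p.SameCycle y a}
  have hcover :
      univ.image p.sameCycleClass ⊆ insert (p.sameCycleClass y) (S.image p.sameCycleClass) := by
    intro c hc
    obtain ⟨a, -, rfl⟩ := mem_image.1 hc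
    by_cases hya : p.SameCycle y a
    · exact mem_insert.2 (Or.inl (sameCycleClass_eq_iff.2 hya.symm))
    · exact mem_insert_of_mem (mem_image_of_mem _ (by simpa [S] using hya))
  have hS : ∀ a ∈ S, ∀ b ∈ S,
      (p * swap x y).sameCycleClass a = (p * swap x y).sameCycleClass b →
        p.sameCycleClass a = p.sameCycleClass b := by
    intro a ha b hb hab
    simp only [S, mem_filter, mem_univ, true_and] at ha hb
    rcases (sameCycleClass_eq_iff.1 hab).of_mul_swap with h | h | h
    · exact sameCycleClass_eq_iff.2 h
    · exact absurd h.2 hb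
    · exact absurd h.1.symm ha
  rw [cycleCount_eq_card_image_sameCycleClass, cycleCount_eq_card_image_sameCycleClass]
  calc #(univ.image p.sameCycleClass) ≤ #(S.image p.sameCycleClass) + 1 :=
        (card_le_card hcover).trans (card_insert_le _ _)
    _ ≤ #(S.image (p * swap x y).sameCycleClass) + 1 := by
        gcongr 1
        exact card_image_le_card_image_of_eq_imp_eq hS
    _ ≤ #(univ.image (p * swap x y).sameCycleClass) + 1 := by
        gcongr
        exact subset_univ S

theorem abs_cycleCount_mul_swap_sub_le (p : Perm α) (x y : α) :
    |(cycleCount (p * swap x y) : ℤ) - cycleCount p| ≤ 1 := by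
  have h₁ := cycleCount_le_cycleCount_mul_swap_add_one p x y
  have h₂ := cycleCount_le_cycleCount_mul_swap_add_one (p * swap x y) x y
  rw [mul_assoc, swap_mul_self, mul_one] at h₂
  rw [abs_le]
  omega

theorem sign_eq_neg_one_pow_card_add_cycleCount (p : Perm α) :
    sign p = (-1) ^ (Fintype.card α + cycleCount p) := by
  have h : Fintype.card α + cycleCount p
      = 2 * (Fintype.card α - p.cycleType.sum)
        + (p.cycleType.sum + Multiset.card p.cycleType) := by
    have := sum_cycleType_le p
    unfold cycleCount
    omega
  rw [sign_of_cycleType, h, pow_add _ (2 * _), pow_mul]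
  simp

theorem cycleCount_sub_cycleCount_mul_swap_mul_swap_mem (p : Perm α) {x y z w : α}
    (hxy : x ≠ y) (hzw : z ≠ w) :
    (cycleCount p : ℤ) - cycleCount (p * swap x y * swap z w) ∈ ({-2, 0, 2} : Set ℤ) := by
  have hsign : sign (p * swap x y * swap z w) = sign p := by
    simp [sign_swap hxy, sign_swap hzw]
  have hparity : Even (((Fintype.card α + cycleCount (p * swap x y * swap z w) : ℕ) : ℤ)
      - (Fintype.card α + cycleCount p : ℕ)) := by
    rw [← Int.negOnePow_eq_iff, Int.negOnePow_def, Int.negOnePow_def, zpow_natCast, zpow_natCast,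
      ← sign_eq_neg_one_pow_card_add_cycleCount, ← sign_eq_neg_one_pow_card_add_cycleCount, hsign]
  obtain ⟨k, hk⟩ := hparity
  have h₁ := abs_cycleCount_mul_swap_sub_le p x y
  have h₂ := abs_cycleCount_mul_swap_sub_le (p * swap x y) z w
  simp only [Set.mem_insert_iff, Set.mem_singleton_iff]
  rw [abs_le] at h₁ h₂
  push_cast at hk
  omega

end Equiv.Perm

open Fin.NatCast in
theorem Fin.natCast_ne_natCast_of_lt {n a b : ℕ} [NeZero n] (hab : a < b) (hba : b - a < n) :
    (a : Fin n) ≠ (b : Fin n) := by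
  intro h
  have hmod : a % n = b % n := by simpa [Fin.ext_iff, Fin.val_natCast] using h
  exact absurd (Nat.le_of_dvd (by omega) ((Nat.modEq_iff_dvd' hab.le).1 hmod)) (by omega)

open Fin.NatCast in
theorem transpose_cycleCount_diff_general
    (n : ℕ) [NeZero n] (f π : Equiv.Perm (Fin n)) (i j l : ℕ)
    (h2 : i ≤ j) (h3 : j < l) (h4 : l ≤ n - 1) :
    ((cycleCount π : ℤ) -
      (cycleCount
        (((f * finRotate n * f⁻¹) * π⁻¹)⁻¹ *
          (Equiv.swap (f (i : Fin n)) (f ((j + 1 : ℕ) : Fin n)) *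
            Equiv.swap (f ((j + 1 : ℕ) : Fin n)) (f ((l + 1 : ℕ) : Fin n)) *
              (f * finRotate n * f⁻¹)) ) : ℤ)) ∈ ({-2, 0, 2} : Set ℤ) := by
  set σ := f * finRotate n * f⁻¹
  set a := f (i : Fin n)
  set b := f ((j + 1 : ℕ) : Fin n)
  set c := f ((l + 1 : ℕ) : Fin n)
  have hab : σ⁻¹ a ≠ σ⁻¹ b :=
    σ⁻¹.injective.ne (f.injective.ne (Fin.natCast_ne_natCast_of_lt (by omega) (by omega)))
  have hbc : σ⁻¹ b ≠ σ⁻¹ c :=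
    σ⁻¹.injective.ne (f.injective.ne (Fin.natCast_ne_natCast_of_lt (by omega) (by omega)))
  have hτ : (σ * π⁻¹)⁻¹ * (swap a b * swap b c * σ)
      = π * swap (σ⁻¹ a) (σ⁻¹ b) * swap (σ⁻¹ b) (σ⁻¹ c) := by
    rw [swap_apply_apply σ⁻¹ a b, swap_apply_apply σ⁻¹ b c, inv_inv]
    group
  rw [hτ]
  exact cycleCount_sub_cycleCount_mul_swap_mul_swap_mem π hab hbc

open Fin.NatCast in
/-- Let `σ = (s_0 s_1 ⋯ s_{n-1})` be the `n`-cycle given by the listing `f`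
(`s_m = f m`), i.e. `σ = f * finRotate n * f⁻¹`, and let `π` be arbitrary,
with diagonal `D = σ * π⁻¹`.  For indices `1 ≤ i ≤ j < l ≤ n - 1`, the
transpose (interchange of the adjacent blocks `[s_i, s_j]` and `[s_{j+1}, s_l]`)
produces the `n`-cycle
`σ' = (s_i s_{j+1}) * (s_{j+1} s_{l+1}) * σ`, and the new vertical permutation
is `τ = D⁻¹ * σ'`.  Then `C(π) - C(τ) ∈ {-2, 0, 2}`. -/
theorem transpose_cycleCount_diff
    (n : ℕ) [NeZero n] (f π : Equiv.Perm (Fin n)) (i j l : ℕ)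
    (h1 : 1 ≤ i) (h2 : i ≤ j) (h3 : j < l) (h4 : l ≤ n - 1) :
    ((cycleCount π : ℤ) -
      (cycleCount
        (((f * finRotate n * f⁻¹) * π⁻¹)⁻¹ *
          (Equiv.swap (f (i : Fin n)) (f ((j + 1 : ℕ) : Fin n)) *
            Equiv.swap (f ((j + 1 : ℕ) : Fin n)) (f ((l + 1 : ℕ) : Fin n)) *
              (f * finRotate n * f⁻¹)) ) : ℤ)) ∈ ({-2, 0, 2} : Set ℤ) :=
  transpose_cycleCount_diff_general n f π i j l h2 h3 h4
end

section
/- A rooted one-face map with n edges and genus g, viewed as a plane permutation p = (s, π) on [2n] whose diagonal D_p = s ∘ π⁻¹ is a fixed-point-free involution and whose vertical permutation π has n + 1 - 2g cycles, has exactly 2g non-trivial anti-exceedances (trisection lemma). -/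
/-!
Read in positions, `π` becomes `φ = f⁻¹ π f` on `Fin (2n)` with its natural order, and the
diagonal becomes the fixed-point-free involution `ψ = (· + 1) ∘ φ⁻¹`. Since `ψ (φ i) = i + 1`,
a position `i` other than the last is an anti-exceedance iff `φ i < ψ (φ i)`, while the last
position always is one. The involution `ψ` splits `Fin (2n)` into `n` pairs, each with exactly
one element below its partner, so there are `n + 1` anti-exceedances. The trivial ones are the
preimages of the cycle minima, one per cycle, which leaves `(n + 1) - (n + 1 - 2g) = 2g`.
-/

open Finset Function

namespace Equiv.Perm

theorem sameCycle_inv_mul_mul {β : Type*} {σ τ : Perm β} {x y : β} :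
    (τ⁻¹ * σ * τ).SameCycle x y ↔ σ.SameCycle (τ x) (τ y) := by
  simpa using sameCycle_conj (g := τ⁻¹) (f := σ) (x := x) (y := y)

variable {α : Type*} [Fintype α] [LinearOrder α]

def cycleMinima (σ : Perm α) : Finset α := {x | ∀ y, σ.SameCycle x y → x ≤ y}

def antiExceedances (φ : Perm α) : Finset α := {i | φ i ≤ i}

def nontrivialAntiExceedances (φ : Perm α) : Finset α :=
  {i | φ i ≤ i ∧ ∃ y, φ.SameCycle (φ i) y ∧ y < φ i}

@[simp]
theorem mem_cycleMinima {σ : Perm α} {x : α} :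
    x ∈ σ.cycleMinima ↔ ∀ y, σ.SameCycle x y → x ≤ y := by
  simp [cycleMinima]

theorem filter_cycleMinima_notMem_support (σ : Perm α) :
    {x ∈ σ.cycleMinima | x ∉ σ.support} = σ.supportᶜ := by
  ext x
  simp only [mem_cycleMinima, mem_filter, mem_compl, and_iff_right_iff_imp, notMem_support]
  exact fun hx y hxy ↦ (hxy.eq_of_left hx).le

theorem card_filter_cycleMinima_mem_support (σ : Perm α) :
    #{x ∈ σ.cycleMinima | x ∈ σ.support} = #σ.cycleFactorsFinset := by
  refine card_bij (fun x _ ↦ σ.cycleOf x) (fun x hx ↦ ?_) (fun a ha b hb hab ↦ ?_) fun c hc ↦ ?_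
  · exact cycleOf_mem_cycleFactorsFinset_iff.mpr (mem_filter.mp hx).2
  · simp only [mem_cycleMinima, mem_filter] at ha hb
    have hsame : σ.SameCycle a b := (sameCycle_iff_cycleOf_eq_of_mem_support ha.2 hb.2).mpr hab
    exact le_antisymm (ha.1 b hsame) (hb.1 a hsame.symm)
  · have hne := (mem_cycleFactorsFinset_iff.mp hc).1.nonempty_support
    have hmin := c.support.min'_mem hne
    have hmin_supp := mem_cycleFactorsFinset_support_le hc hmin
    have hcyc := cycle_is_cycleOf hmin hc
    refine ⟨c.support.min' hne, ?_, hcyc.symm⟩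
    simp only [mem_cycleMinima, mem_filter]
    refine ⟨fun y hy ↦ c.support.min'_le y ?_, hmin_supp⟩
    rw [hcyc, mem_support_cycleOf_iff]
    exact ⟨hy, hmin_supp⟩

theorem cycleCount_eq_card_cycleMinima (σ : Perm α) : cycleCount σ = #σ.cycleMinima := by
  have hcard : #σ.cycleFactorsFinset = σ.cycleType.card := by
    rw [cycleType_def, Multiset.card_map]; rfl
  rw [← card_filter_add_card_filter_not (s := σ.cycleMinima) (· ∉ σ.support),
    filter_cycleMinima_notMem_support]
  simp only [not_not]
  rw [card_filter_cycleMinima_mem_support, card_compl, cycleCount, sum_cycleType, hcard]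

theorem card_antiExceedances_eq (φ : Perm α) :
    #φ.antiExceedances = #φ.nontrivialAntiExceedances + cycleCount φ := by
  have htrivial :
      φ.antiExceedances.filter (φ · ∈ φ.cycleMinima) = ({i | φ i ∈ φ.cycleMinima} : Finset α) := by
    ext i
    simp only [antiExceedances, mem_filter, mem_univ, true_and, and_iff_right_iff_imp,
      mem_cycleMinima]
    exact fun h ↦ h i (SameCycle.refl _ _).apply_left
  have hnontrivial :
      φ.antiExceedances.filter (φ · ∉ φ.cycleMinima) = φ.nontrivialAntiExceedances := by
    ext i
    simp [antiExceedances, nontrivialAntiExceedances]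
  have hcard : #{i | φ i ∈ φ.cycleMinima} = #φ.cycleMinima := card_equiv φ fun i ↦ by simp
  rw [← card_filter_add_card_filter_not (s := φ.antiExceedances) (φ · ∈ φ.cycleMinima),
    htrivial, hnontrivial, hcard, cycleCount_eq_card_cycleMinima, add_comm]

theorem two_mul_card_filter_lt_apply {ψ : Perm α} (hinv : Involutive ψ)
    (hfix : ∀ x, ψ x ≠ x) : 2 * #{x | x < ψ x} = Fintype.card α := by
  have hswap : #{x | ψ x < x} = #{x | x < ψ x} := card_equiv ψ fun x ↦ by simp [hinv x]
  have hgt : ∀ x, ¬ x < ψ x ↔ ψ x < x := fun x ↦ by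
    rw [not_lt]; exact ⟨fun h ↦ h.lt_of_ne (hfix x), le_of_lt⟩
  rw [← card_univ, ← card_filter_add_card_filter_not (s := univ) (fun x ↦ x < ψ x)]
  simp only [hgt, hswap]
  ring

theorem two_mul_card_antiExceedances {N : ℕ} [NeZero N] (φ : Perm (Fin N))
    (hinv : Involutive (finRotate N * φ⁻¹)) (hfix : ∀ x, (finRotate N * φ⁻¹) x ≠ x) :
    2 * #φ.antiExceedances = N + 2 := by
  obtain ⟨m, rfl⟩ : ∃ m, N = m + 1 := Nat.exists_eq_succ_of_ne_zero (NeZero.ne N)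
  set ψ := finRotate (m + 1) * φ⁻¹
  have hψ : ∀ i, ψ (φ i) = i + 1 := fun i ↦ by simp [ψ, finRotate_apply]
  have hsplit :
      φ.antiExceedances = insert (Fin.last m) ({i | φ i < ψ (φ i)} : Finset _) := by
    ext i
    simp only [antiExceedances, hψ, mem_insert, mem_filter, mem_univ, true_and]
    rcases eq_or_ne i (Fin.last m) with rfl | hi
    · simp [Fin.le_last]
    · rw [Fin.lt_def, Fin.val_add_one, if_neg hi, Fin.le_def]
      simp [hi]
  have hlast : Fin.last m ∉ ({i | φ i < ψ (φ i)} : Finset _) := by simp [hψ]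
  have hreindex : #{i | φ i < ψ (φ i)} = #{x | x < ψ x} := card_equiv φ fun i ↦ by simp
  rw [hsplit, card_insert_of_notMem hlast, hreindex, mul_add,
    two_mul_card_filter_lt_apply hinv hfix, Fintype.card_fin]

end Equiv.Perm

open Equiv.Perm

/-- `p = (s, π)` is given by a listing `f` of `s` (`s_i = f i`, `s = f * finRotate (2n) * f⁻¹`),
and the set consists of the positions `i` of the NTAEs `s_i`. -/
theorem trisection_lemma_general
    (n g : ℕ) (f π : Equiv.Perm (Fin (2 * n)))
    (hD1 : ((f * finRotate (2 * n) * f⁻¹) * π⁻¹) *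
             ((f * finRotate (2 * n) * f⁻¹) * π⁻¹) = 1)
    (hD2 : ∀ x, ((f * finRotate (2 * n) * f⁻¹) * π⁻¹) x ≠ x)
    (hπ : cycleCount π + 2 * g = n + 1) :
    {i : Fin (2 * n) |
        f.symm (π (f i)) ≤ i ∧
        ∃ y, π.SameCycle (π (f i)) y ∧ f.symm y < f.symm (π (f i))}.ncard
      = 2 * g := by
  set D := (f * finRotate (2 * n) * f⁻¹) * π⁻¹
  set φ := f⁻¹ * π * f
  have hset : {i : Fin (2 * n) |
        f.symm (π (f i)) ≤ i ∧ ∃ y, π.SameCycle (π (f i)) y ∧ f.symm y < f.symm (π (f i))}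
      = φ.nontrivialAntiExceedances := by
    ext i
    simp only [nontrivialAntiExceedances, coe_filter, mem_univ, true_and, Set.mem_ofPred_eq]
    exact and_congr_right fun _ ↦ f.symm.exists_congr_left.trans (by simp [φ, sameCycle_inv_mul_mul])
  have hcyc : cycleCount φ = cycleCount π := by
    rw [cycleCount, cycleCount, show φ = f⁻¹ * π * f⁻¹⁻¹ by rw [inv_inv], cycleType_conj]
  have hcount := card_antiExceedances_eq φ
  have : NeZero (2 * n) := ⟨fun h ↦ by
    have := card_le_univ φ.antiExceedances
    rw [Fintype.card_fin] at this
    omega⟩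
  have hconj : finRotate (2 * n) * φ⁻¹ = f⁻¹ * D * f := by simp only [D, φ]; group
  have hinv : Involutive (finRotate (2 * n) * φ⁻¹) := fun x ↦ by
    simpa [hconj] using congr(f.symm ($hD1 (f x)))
  have hfix : ∀ x, (finRotate (2 * n) * φ⁻¹) x ≠ x := fun x h ↦ by
    rw [hconj] at h
    exact hD2 (f x) (by simpa [Equiv.symm_apply_eq] using h)
  have hAE := two_mul_card_antiExceedances φ hinv hfix
  rw [hset, Set.ncard_coe_finset]
  omega

/-- **Trisection lemma.**  Let `p = (s, π)` be a plane permutation on `[2n]`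
given by a listing `f` (`s_i = f i`, `s = f * finRotate (2n) * f⁻¹`), whose
diagonal `D = s * π⁻¹` is a fixed-point-free involution and whose vertical
permutation `π` has `n + 1 - 2g` cycles.  A position `i` is an anti-exceedance
if `s_i ≥_s π (s_i)`, and it is non-trivial (an NTAE) if moreover `π (s_i)` is
not the `<_s`-minimal element of its `π`-cycle.  Then `p` has exactly `2g`
NTAEs. -/
theorem trisection_lemma
    (n g : ℕ) (hn : 0 < n) (f π : Equiv.Perm (Fin (2 * n)))
    (hD1 : ((f * finRotate (2 * n) * f⁻¹) * π⁻¹) *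
             ((f * finRotate (2 * n) * f⁻¹) * π⁻¹) = 1)
    (hD2 : ∀ x, ((f * finRotate (2 * n) * f⁻¹) * π⁻¹) x ≠ x)
    (hπ : cycleCount π + 2 * g = n + 1) :
    {i : Fin (2 * n) |
        f.symm (π (f i)) ≤ i ∧
        ∃ y, π.SameCycle (π (f i)) y ∧ f.symm y < f.symm (π (f i))}.ncard
      = 2 * g :=
  trisection_lemma_general n g f π hD1 hD2 hπ
end

section
/- The total number of exceedances over all permutations of [n] with exactly k cycles equals binomial(n, 2) · C(n-1, k). -/
/-- Unsigned Stirling number of the first kind. -/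
def stirling1 (n k : ℕ) : ℕ :=
  (Finset.univ.filter (fun σ : Equiv.Perm (Fin n) => cycleCount σ = k)).card

open Equiv Equiv.Perm Finset

namespace Equiv.Perm

variable {α : Type*} [Fintype α] [DecidableEq α]

lemma cycleCount_mul_of_disjoint {σ τ : Perm α} (h : σ.Disjoint τ) :
    cycleCount (σ * τ) + Fintype.card α = cycleCount σ + cycleCount τ := by
  have hsupp : #σ.support + #τ.support ≤ Fintype.card α := by
    rw [← card_union_of_disjoint (disjoint_iff_disjoint_support.mp h)]
    exact card_le_univ _
  unfold cycleCount
  simp only [h.cycleType_mul, Multiset.sum_add, Multiset.card_add, sum_cycleType]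
  omega

lemma IsCycle.cycleCount_add_card_support_s7 {c : Perm α} (hc : c.IsCycle) :
    cycleCount c + #c.support = Fintype.card α + 1 := by
  have := card_le_univ c.support
  unfold cycleCount
  rw [hc.cycleType]
  simp only [Multiset.sum_singleton, Multiset.card_singleton]
  omega

lemma isCycle_swap_mul_cycleOf {σ : Perm α} {a b : α} (ha : σ a = a) (hb : σ b ≠ b) :
    (swap a b * σ.cycleOf b).IsCycle ∧
      (swap a b * σ.cycleOf b).support = insert a (σ.cycleOf b).support := by
  have hb' : b ∈ σ.support := mem_support.mpr hb
  obtain ⟨l, hl⟩ : ∃ l, σ.toList b = b :: l := by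
    obtain ⟨m, hm⟩ := Nat.exists_eq_add_of_lt (length_toList_pos_of_mem_support σ b hb')
    exact ⟨_, by rw [Perm.length_toList, zero_add] at hm; rw [Perm.toList, hm]; rfl⟩
  have hnodup : (a :: σ.toList b).Nodup := by
    refine List.nodup_cons.mpr ⟨fun h => ?_, nodup_toList σ b⟩
    exact hb (((mem_toList_iff.mp h).1.apply_eq_self_iff).mpr ha)
  have hcycle : swap a b * σ.cycleOf b = (a :: σ.toList b).formPerm := by
    rw [← formPerm_toList, hl, List.formPerm_cons_cons]
  have hlen := two_le_length_toList_iff_mem_support.mpr hb'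
  rw [hcycle, List.support_formPerm_of_nodup _ hnodup (by simp [hl]), ← formPerm_toList,
    List.support_formPerm_of_nodup _ (nodup_toList σ b) (toList_ne_singleton _ _),
    List.toFinset_cons]
  exact ⟨List.isCycle_formPerm hnodup (by rw [List.length_cons]; omega), rfl⟩

lemma cycleCount_swap_mul {σ : Perm α} {a b : α} (ha : σ a = a) (hab : a ≠ b) :
    cycleCount (swap a b * σ) + 1 = cycleCount σ := by
  by_cases hb : σ b = b
  · have hdisj : (swap a b).Disjoint σ := by
      rw [disjoint_iff_disjoint_support, support_swap hab]
      simp [ha, hb]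
    have h1 := cycleCount_mul_of_disjoint hdisj
    have h2 := (isCycle_swap hab).cycleCount_add_card_support_s7
    rw [card_support_swap hab] at h2
    omega
  · obtain ⟨hcyc, hsupp⟩ := isCycle_swap_mul_cycleOf ha hb
    have hC := σ.isCycle_cycleOf hb
    have hdC : (σ * (σ.cycleOf b)⁻¹).Disjoint (σ.cycleOf b) :=
      disjoint_mul_inv_of_mem_cycleFactorsFinset
        (cycleOf_mem_cycleFactorsFinset_iff.mpr (mem_support.mpr hb))
    -- `σ = C * d` with `C` the cycle through `b` and `d` disjoint from it; the swap acts on `C`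
    set C := σ.cycleOf b
    set d := σ * C⁻¹
    have hσa : a ∉ σ.support := notMem_support.mpr ha
    have hCa : a ∉ C.support := fun h => hσa (support_cycleOf_le σ b h)
    have hda : a ∉ d.support := fun h => by
      simpa [support_inv, hσa, hCa] using support_mul_le σ C⁻¹ h
    have hσ : C * d = σ := by rw [← hdC.commute.eq, inv_mul_cancel_right]
    have hdisj : (swap a b * C).Disjoint d := by
      rw [disjoint_iff_disjoint_support, hsupp, disjoint_insert_left]
      exact ⟨hda, (disjoint_iff_disjoint_support.mp hdC).symm⟩
    have h1 := cycleCount_mul_of_disjoint hdisj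
    have h2 := cycleCount_mul_of_disjoint hdC.symm
    have h3 := hcyc.cycleCount_add_card_support_s7
    have h4 := hC.cycleCount_add_card_support_s7
    rw [hsupp, card_insert_of_notMem hCa] at h3
    rw [hσ] at h2
    rw [mul_assoc, hσ] at h1
    omega

lemma card_filter_cycleCount_apply_eq_of_ne (k : ℕ) {a b : α} (hab : a ≠ b) :
    #{σ : Perm α | cycleCount σ = k ∧ σ a = b} =
      #{τ : Perm α | cycleCount τ = k + 1 ∧ τ a = a} := by
  refine card_nbij' (swap a b * ·) (swap a b * ·) ?_ ?_ ?_ ?_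
  · intro σ hσ
    simp only [coe_filter, Set.mem_ofPred_eq, mem_univ, true_and] at hσ ⊢
    obtain ⟨hk, hσa⟩ := hσ
    have hfix : (swap a b * σ) a = a := by simp [hσa]
    refine ⟨?_, hfix⟩
    have := cycleCount_swap_mul hfix hab
    rw [← mul_assoc, swap_mul_self, one_mul] at this
    omega
  · intro τ hτ
    simp only [coe_filter, Set.mem_ofPred_eq, mem_univ, true_and] at hτ ⊢
    obtain ⟨hk, hτa⟩ := hτ
    refine ⟨?_, by simp [hτa]⟩
    have := cycleCount_swap_mul hτa hab
    omega
  · intro σ _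
    simp [← mul_assoc]
  · intro τ _
    simp [← mul_assoc]

lemma cycleCount_extendDomain {β : Type*} [Fintype β] [DecidableEq β] {a : α}
    (f : β ≃ {x // x ≠ a}) (g : Perm β) :
    cycleCount (g.extendDomain f) = cycleCount g + 1 := by
  have hcard : Fintype.card α = Fintype.card β + 1 := by
    rw [Fintype.card_congr f, Fintype.card_subtype_compl, Fintype.card_subtype_eq]
    have := Fintype.card_pos_iff.mpr ⟨a⟩
    omega
  have := sum_cycleType_le g
  unfold cycleCount
  rw [cycleType_extendDomain, hcard]
  omega

lemma card_filter_cycleCount_succ_apply_self {β : Type*} [Fintype β] [DecidableEq β] (k : ℕ)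
    {a : α} (f : β ≃ {x // x ≠ a}) :
    #{τ : Perm α | cycleCount τ = k + 1 ∧ τ a = a} = #{g : Perm β | cycleCount g = k} := by
  symm
  refine card_bij (fun g _ => g.extendDomain f) ?_
    (fun _ _ _ _ h => extendDomainHom_injective f h) ?_
  · intro g hg
    simp only [mem_filter, mem_univ, true_and] at hg ⊢
    exact ⟨by rw [cycleCount_extendDomain, hg], extendDomain_apply_not_subtype _ _ (by simp)⟩
  · intro τ hτ
    simp only [mem_filter, mem_univ, true_and] at hτ
    obtain ⟨hk, hτa⟩ := hτ
    have hτne : ∀ x, τ x ≠ a ↔ x ≠ a := fun _ => τ.injective.ne_iff' hτa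
    set g := f.permCongr.symm (τ.subtypePerm hτne)
    have hg : g.extendDomain f = τ := by
      ext x
      by_cases hx : x = a
      · subst hx; simp [extendDomain_apply_not_subtype, hτa]
      · rw [extendDomain_apply_subtype _ f (p := (· ≠ a)) hx]
        simp [g]
    refine ⟨g, ?_, hg⟩
    simp only [mem_filter, mem_univ, true_and]
    have := cycleCount_extendDomain f g
    rw [hg] at this
    omega

end Equiv.Perm

lemma Fin.sum_card_Ioi (n : ℕ) : ∑ i : Fin n, #(Ioi i) = n.choose 2 := by
  induction n with
  | zero => rfl
  | succ n ih =>
    rw [Fin.sum_univ_succ, Nat.choose_succ_succ', Nat.choose_one_right, ← ih]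
    have hsucc (x : Fin n) : n + 1 - 1 - (x + 1 : ℕ) = n - 1 - x := by omega
    simp only [Fin.card_Ioi, Fin.val_zero, Fin.val_succ, hsucc]
    omega

lemma card_filter_cycleCount_apply_eq_stirling1 (m k : ℕ) {i j : Fin (m + 1)} (hij : i ≠ j) :
    #{σ : Perm (Fin (m + 1)) | cycleCount σ = k ∧ σ i = j} = stirling1 m k := by
  rw [card_filter_cycleCount_apply_eq_of_ne k hij,
    card_filter_cycleCount_succ_apply_self k (finSuccAboveEquiv i), stirling1]

lemma card_filter_cycleCount_lt_apply (m k : ℕ) (i : Fin (m + 1)) :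
    #{σ ∈ univ.filter (fun σ : Perm (Fin (m + 1)) => cycleCount σ = k) | i < σ i} =
      #(Ioi i) * stirling1 m k := by
  rw [card_eq_sum_card_fiberwise (f := fun σ : Perm (Fin (m + 1)) => σ i) (t := Ioi i)
    (fun σ hσ => mem_Ioi.mpr (mem_filter.mp hσ).2), ← smul_eq_mul, ← sum_const]
  refine sum_congr rfl fun j hj => ?_
  rw [← card_filter_cycleCount_apply_eq_stirling1 m k (mem_Ioi.mp hj).ne]
  congr 1
  ext σ
  simp only [mem_filter, mem_univ, true_and]
  exact ⟨fun h => ⟨h.1.1, h.2⟩, fun h => ⟨⟨h.1, h.2 ▸ mem_Ioi.mp hj⟩, h.2⟩⟩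

theorem total_exceedances_eq_general (n k : ℕ) :
    (∑ σ ∈ Finset.univ.filter
        (fun σ : Equiv.Perm (Fin n) => cycleCount σ = k),
      (Finset.univ.filter (fun i : Fin n => i < σ i)).card) =
    Nat.choose n 2 * stirling1 (n - 1) k := by
  rcases n with _ | m
  · simp
  refine (sum_card_bipartiteAbove_eq_sum_card_bipartiteBelow
    (fun (σ : Perm (Fin (m + 1))) i => i < σ i)).trans ?_
  simp only [bipartiteBelow, card_filter_cycleCount_lt_apply, ← sum_mul, Fin.sum_card_Ioi]
  rfl

/-- The total number of exceedances (`i` with `π i > i`) over all permutations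
of `[n]` with exactly `k` cycles equals `C(n, 2) · C(n-1, k)`. -/
theorem total_exceedances_eq (n k : ℕ) (hn : 1 ≤ n) :
    (∑ σ ∈ Finset.univ.filter
        (fun σ : Equiv.Perm (Fin n) => cycleCount σ = k),
      (Finset.univ.filter (fun i : Fin n => i < σ i)).card) =
    Nat.choose n 2 * stirling1 (n - 1) k :=
  total_exceedances_eq_general n k
end

section
/- Let p = (s̄, π) be a plane permutation on {0, 1, ..., n} whose diagonal is D_p = s̄ ∘ π⁻¹ = p_t⁻¹, where p_t = (n n-1 ... 1 0), and suppose s̄ ≠ (0 1 2 ... n). Then there exist positions i-1 < j < k-1 ≤ l in the listing of s̄ (with order <_{s̄}) such that π(s̄_{i-1}) = s̄_{k-1} and π(s̄_l) = s̄_j. -/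
/-! Since `s̄ (f a) = f (a + 1)`, we have `π (f a) = f (a + 1) - 1`, so the two conditions read
`f (p + 1) = f r + 1` and `f (t + 1) = f q + 1`. Let `x` be the least position moved by `f`;
then `x < f x` and `f` fixes every position below `x`. Take `p = x - 1` and let `r` be the
position of the value `f x - 1`, which lies after `x`. Let `q` maximize `f` on `[x, r]` and let
`t + 1` be the position of `f q + 1`: by maximality it lies beyond `r`, unless `f q = n` and
`t + 1` wraps around to `0`, in which case `t = n`. -/

open Equiv

theorem Equiv.Perm.exists_lt_apply_forall_lt_apply_eq {α : Type*} [LinearOrder α]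
    [WellFoundedLT α] {f : Perm α} (hf : f ≠ 1) : ∃ x, x < f x ∧ ∀ y < x, f y = y := by
  have hmoved : {y | f y ≠ y}.Nonempty := by
    by_contra! h
    exact hf (Perm.ext fun y => by simpa using Set.eq_empty_iff_forall_notMem.mp h y)
  obtain ⟨x, hx, hmin⟩ := wellFounded_lt.has_min _ hmoved
  have hfix : ∀ y < x, f y = y := fun y hy => by simpa using mt (hmin y) (not_not.mpr hy)
  refine ⟨x, (le_of_not_gt fun hlt => hx ?_).lt_of_ne' hx, hfix⟩
  exact f.injective (hfix _ hlt)

theorem lt_of_apply_lt_apply_of_forall_le {α : Type*} [LinearOrder α] {f : α → α}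
    {x q r w : α} (hx : x < f x) (hfix : ∀ y < x, f y = y) (hxr : x ≤ r)
    (hmax : ∀ m ∈ Set.Icc x r, f m ≤ f q) (hw : f q < f w) : r < w := by
  by_contra! hwr
  rcases lt_or_ge w x with hwx | hxw
  · rw [hfix w hwx] at hw
    exact (hw.trans (hwx.trans hx)).not_ge (hmax x ⟨le_rfl, hxr⟩)
  · exact (hmax w ⟨hxw, hwr⟩).not_gt hw

theorem Fin.le_sub_one_of_lt {n : ℕ} {a b : Fin (n + 1)} (h : a < b) : a ≤ b - 1 := by
  have hb : b ≠ 0 := ((Fin.zero_le a).trans_lt h).ne'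
  rw [Fin.le_def, Fin.coe_sub_one, if_neg hb]
  have := Fin.lt_def.mp h
  omega

theorem Fin.lt_of_add_one_eq {n : ℕ} {a b : Fin (n + 1)} (h : a + 1 = b) (hb : 0 < b) :
    a < b := by
  rw [eq_sub_of_add_eq h]
  exact Fin.sub_one_lt_iff.mpr hb

theorem lt_of_apply_add_one_eq {n : ℕ} {f : Fin (n + 1) → Fin (n + 1)} {x r : Fin (n + 1)}
    (hx : x < f x) (hfix : ∀ y < x, f y = y) (hr : f r + 1 = f x) : x < r := by
  have hfr : f r < f x := Fin.lt_of_add_one_eq hr ((Fin.zero_le x).trans_lt hx)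
  refine lt_of_le_of_ne (le_of_not_gt fun hrx => ?_) (by rintro rfl; exact hfr.false)
  have : f x ≤ x := by simpa [← hr, hfix r hrx] using Fin.add_one_le_of_lt hrx
  exact this.not_gt hx

section

variable {n : ℕ} {f : Perm (Fin (n + 1))}

theorem finRotate_inv_mul_conj_apply (a : Fin (n + 1)) :
    ((finRotate (n + 1))⁻¹ * (f * finRotate (n + 1) * f⁻¹)) (f a) = f (a + 1) - 1 := by
  simp [Perm.inv_def, finRotate_apply, finRotate_symm_apply]

theorem le_symm_apply_add_one_sub_one (hf0 : f 0 = 0) {q r : Fin (n + 1)}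
    (hr : ∀ w, f q < f w → r < w) : r ≤ f⁻¹ (f q + 1) - 1 := by
  by_cases hq : f q = Fin.last n
  · have : f⁻¹ 0 = 0 := by rw [Perm.inv_eq_iff_eq, hf0]
    rw [hq, Fin.last_add_one, this, ← Fin.last_add_one n, add_sub_cancel_right]
    exact Fin.le_last r
  · exact Fin.le_sub_one_of_lt <| hr _ <| by
      simpa using Fin.lt_add_one_iff.mpr (lt_of_le_of_ne (Fin.le_last _) hq)

theorem Equiv.Perm.exists_lt_lt_le_apply_add_one_eq (hf0 : f 0 = 0) (hf : f ≠ 1) :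
    ∃ p q r t : Fin (n + 1), p < q ∧ q < r ∧ r ≤ t ∧
      f (p + 1) = f r + 1 ∧ f (t + 1) = f q + 1 := by
  obtain ⟨x, hx, hfix⟩ := f.exists_lt_apply_forall_lt_apply_eq hf
  set r := f⁻¹ (f x - 1)
  have hfr : f r + 1 = f x := by simp [r]
  have hxr : x < r := lt_of_apply_add_one_eq hx hfix hfr
  obtain ⟨q, hq, hmax⟩ := (Finset.Icc x r).exists_max_image f ⟨x, by simp [hxr.le]⟩
  rw [Finset.mem_Icc] at hq
  replace hmax : ∀ m ∈ Set.Icc x r, f m ≤ f q := fun m hm => hmax m (Finset.mem_Icc.mpr hm)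
  have hqr : q < r := by
    refine hq.2.lt_of_ne fun hqr => ?_
    have hfrx : f r < f x := Fin.lt_of_add_one_eq hfr ((Fin.zero_le x).trans_lt hx)
    exact (hqr ▸ hmax x ⟨le_rfl, hxr.le⟩).not_gt hfrx
  have hrt : r ≤ f⁻¹ (f q + 1) - 1 := le_symm_apply_add_one_sub_one hf0 fun _ =>
    lt_of_apply_lt_apply_of_forall_le hx hfix hxr.le hmax
  have hx0 : 0 < x := Fin.pos_of_ne_zero (by rintro rfl; simp [hf0] at hx)
  refine ⟨x - 1, q, r, f⁻¹ (f q + 1) - 1, (Fin.sub_one_lt_iff.mpr hx0).trans_le hq.1, hqr, hrt,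
    by simp [hfr], by simp⟩

end

/-- Let `p = (s̄, π)` be a plane permutation on `{0, 1, …, n}`, where
`s̄ = (s̄_0 s̄_1 ⋯ s̄_n)` is given by a listing `f` with `s̄_m = f m` and
`f 0 = 0` (so `s̄ = f * finRotate (n+1) * f⁻¹`), and whose diagonal is
`D_p = s̄ * π⁻¹ = p_t⁻¹` where `p_t = (n n-1 ⋯ 1 0) = (finRotate (n+1))⁻¹`;
hence `π = (finRotate (n+1))⁻¹ * s̄`.  If `s̄ ≠ (0 1 2 ⋯ n)`, then there are
positions `p < q < r ≤ t` (in the order `<_s̄` of the listing) with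
`π (s̄_p) = s̄_r` and `π (s̄_t) = s̄_q`. -/
theorem exists_good_blockInterchange
    (n : ℕ) (f : Equiv.Perm (Fin (n + 1))) (hf0 : f 0 = 0)
    (hs : f * finRotate (n + 1) * f⁻¹ ≠ finRotate (n + 1)) :
    ∃ p q r t : Fin (n + 1), p < q ∧ q < r ∧ r ≤ t ∧
      ((finRotate (n + 1))⁻¹ * (f * finRotate (n + 1) * f⁻¹)) (f p) = f r ∧
      ((finRotate (n + 1))⁻¹ * (f * finRotate (n + 1) * f⁻¹)) (f t) = f q := by
  have hf : f ≠ 1 := by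
    rintro rfl
    simp at hs
  obtain ⟨p, q, r, t, hpq, hqr, hrt, hp, ht⟩ := Perm.exists_lt_lt_le_apply_add_one_eq hf0 hf
  refine ⟨p, q, r, t, hpq, hqr, hrt, ?_, ?_⟩ <;>
    simp only [finRotate_inv_mul_conj_apply, hp, ht, add_sub_cancel_right]
end
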